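/- Let G be a WGA with {q_I} ∈ Obs and let lmax ≥ 1. If Eve wins the DirFix(0,lmax) objective in G, then she also wins the safety objective in the perfect-information game G' (never visiting 𝒰). Explicitly: if λ is a winning strategy for Eve for DirFix(0,lmax) in G, then the strategy λ' defined on finite histories ρ' of G' by λ'(ρ') = λ(obs(supp(ρ'))) (replacing each function f_i in ρ' by the observation containing supp(f_i)) is winning for Eve in the safety game G'. -/

import Mathlib

open scoped Classical

/-- A weighted game arena with partial observation. -/
structure WGA where
  Q : Type
  fintypeQ : Fintype Q
  qI : Q
  A : Type
  fintypeA : Fintype A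
  nonemptyA : Nonempty A
  Δ : Q → A → Q → Prop
  total : ∀ q a, ∃ q', Δ q a q'
  w : Q → A → Q → ℤ
  Obs : Set (Set Q)
  obs_empty : ∅ ∉ Obs
  obs_partition : ∀ q : Q, ∃! o, o ∈ Obs ∧ q ∈ o

attribute [instance] WGA.fintypeQ WGA.fintypeA WGA.nonemptyA

namespace WGA

variable (G : WGA)

/-- A concrete path compatible with the given sequences of observations and actions. -/
def Concretizes (obs : ℕ → Set G.Q) (act : ℕ → G.A) (π : ℕ → G.Q) : Prop :=
  (∀ i, π i ∈ obs i) ∧ ∀ i, G.Δ (π i) (act i) (π (i + 1))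

/-- Plays: infinite abstract paths starting at the initial observation. -/
def IsPlay (obs : ℕ → Set G.Q) (act : ℕ → G.A) : Prop :=
  (∀ i, obs i ∈ G.Obs) ∧ G.qI ∈ obs 0 ∧ ∃ π, G.Concretizes obs act π

/-- Sum of the `j` transition weights starting at position `i`. -/
def winSum (π : ℕ → G.Q) (act : ℕ → G.A) (i j : ℕ) : ℤ :=
  ∑ k ∈ Finset.range j, G.w (π (i + k)) (act (i + k)) (π (i + k + 1))

/-- Good window at position `i` with window size bound `lmax`. -/
def GW (ν : ℚ) (i lmax : ℕ) (π : ℕ → G.Q) (act : ℕ → G.A) : Prop :=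
  ∃ j, 1 ≤ j ∧ j ≤ lmax ∧ ν ≤ (G.winSum π act i j : ℚ) / (j : ℚ)

def DirFix (ν : ℚ) (lmax : ℕ) (obs : ℕ → Set G.Q) (act : ℕ → G.A) : Prop :=
  ∀ π, G.Concretizes obs act π → ∀ i, G.GW ν i lmax π act

def UFix (ν : ℚ) (lmax : ℕ) (obs : ℕ → Set G.Q) (act : ℕ → G.A) : Prop :=
  ∃ i, ∀ π, G.Concretizes obs act π → ∀ j, i ≤ j → G.GW ν j lmax π act

def Fix (ν : ℚ) (lmax : ℕ) (obs : ℕ → Set G.Q) (act : ℕ → G.A) : Prop :=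
  ∀ π, G.Concretizes obs act π → ∃ i, ∀ j, i ≤ j → G.GW ν j lmax π act

def UDirBnd (ν : ℚ) (obs : ℕ → Set G.Q) (act : ℕ → G.A) : Prop :=
  ∃ lmax, 1 ≤ lmax ∧ ∀ π, G.Concretizes obs act π → ∀ i, G.GW ν i lmax π act

def DirBnd (ν : ℚ) (obs : ℕ → Set G.Q) (act : ℕ → G.A) : Prop :=
  ∀ π, G.Concretizes obs act π → ∃ lmax, 1 ≤ lmax ∧ ∀ i, G.GW ν i lmax π act

def UBnd (ν : ℚ) (obs : ℕ → Set G.Q) (act : ℕ → G.A) : Prop :=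
  ∃ lmax, 1 ≤ lmax ∧ ∃ i, ∀ π, G.Concretizes obs act π → ∀ j, i ≤ j → G.GW ν j lmax π act

def Bnd (ν : ℚ) (obs : ℕ → Set G.Q) (act : ℕ → G.A) : Prop :=
  ∀ π, G.Concretizes obs act π → ∃ lmax, 1 ≤ lmax ∧ ∃ i, ∀ j, i ≤ j → G.GW ν j lmax π act

noncomputable def MPinf (π : ℕ → G.Q) (act : ℕ → G.A) : ℝ :=
  Filter.liminf (fun n : ℕ => (G.winSum π act 0 n : ℝ) / (n : ℝ)) Filter.atTop

noncomputable def MPsup (π : ℕ → G.Q) (act : ℕ → G.A) : ℝ :=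
  Filter.limsup (fun n : ℕ => (G.winSum π act 0 n : ℝ) / (n : ℝ)) Filter.atTop

def MPInfObj (ν : ℚ) (obs : ℕ → Set G.Q) (act : ℕ → G.A) : Prop :=
  ∀ π, G.Concretizes obs act π → (ν : ℝ) ≤ G.MPinf π act

def MPSupObj (ν : ℚ) (obs : ℕ → Set G.Q) (act : ℕ → G.A) : Prop :=
  ∀ π, G.Concretizes obs act π → (ν : ℝ) ≤ G.MPsup π act

/-- The finite history (prefix) of a play after `n` steps, ending with `obs n`. -/
def hist (obs : ℕ → Set G.Q) (act : ℕ → G.A) (n : ℕ) : List (Set G.Q × G.A) :=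
  (List.range n).map fun i => (obs i, act i)

/-- A play is consistent with an observation-based strategy of Eve. -/
def Consistent (str : List (Set G.Q × G.A) → Set G.Q → G.A)
    (obs : ℕ → Set G.Q) (act : ℕ → G.A) : Prop :=
  ∀ n, act n = str (G.hist obs act n) (obs n)

/-- Eve wins an objective if some observation-based strategy forces it on all plays. -/
def Wins (V : (ℕ → Set G.Q) → (ℕ → G.A) → Prop) : Prop :=
  ∃ str : List (Set G.Q × G.A) → Set G.Q → G.A,
    ∀ obs act, G.IsPlay obs act → G.Consistent str obs act → V obs act

/-- σ-successors of a set of states. -/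
def postSet (σ : G.A) (s : Set G.Q) : Set G.Q := {q' | ∃ q ∈ s, G.Δ q σ q'}

end WGA

namespace WGA

variable (G : WGA)

/-- Elements of the function space 𝓕 (validity constraints are given by `ValidF`). -/
def FMap := G.Q → Option (ℕ → ℤ)

/-- The support of an element of 𝓕. -/
def fsupp (f : FMap G) : Set G.Q := {q | f q ≠ none}

/-- `f(q)_i`, the value of `f` at state `q` and window index `i`. -/
def fval (f : FMap G) (q : G.Q) (i : ℕ) : ℤ := ((f q).getD fun _ => 0) i

/-- Membership in 𝓕: values at indices `1,…,lmax` lie in `{−W·lmax,…,0}`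
(values at other indices are normalized to `0`). -/
def ValidF (lmax W : ℕ) (f : FMap G) : Prop :=
  ∀ q g, f q = some g →
    (∀ i, 1 ≤ i → i ≤ lmax → -((W : ℤ) * (lmax : ℤ)) ≤ g i ∧ g i ≤ 0) ∧
    (∀ i, i = 0 ∨ lmax < i → g i = 0)

def Fset (lmax W : ℕ) : Set (FMap G) := {f | G.ValidF lmax W f}

/-- The set whose minimum is `ζ(q)` in the definition of σ-successor. -/
def zetaSet (f1 : FMap G) (σ : G.A) (q : G.Q) (j : ℕ) : Set ℤ :=
  if j = 1 then {x | ∃ p ∈ G.fsupp f1, G.Δ p σ q ∧ x = G.w p σ q}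
  else {x | ∃ p ∈ G.fsupp f1, G.Δ p σ q ∧ G.fval f1 p (j - 1) < 0 ∧
        x = G.fval f1 p (j - 1) + G.w p σ q}

/-- `v = max(−W·lmax, min(0, min Z))`, where the minimum of the empty set is `+∞`. -/
def succVal (lmax W : ℕ) (Z : Set ℤ) (v : ℤ) : Prop :=
  (Z = ∅ ∧ v = max (-((W : ℤ) * (lmax : ℤ))) 0) ∨
  ∃ z, IsLeast Z z ∧ v = max (-((W : ℤ) * (lmax : ℤ))) (min 0 z)

/-- `f2` is a σ-successor of `f1`. -/
def IsSucc (lmax W : ℕ) (f1 : FMap G) (σ : G.A) (f2 : FMap G) : Prop :=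
  G.ValidF lmax W f2 ∧
  (∃ o ∈ G.Obs, G.fsupp f2 = G.postSet σ (G.fsupp f1) ∩ o) ∧
  ∀ q ∈ G.fsupp f2, ∀ j, 1 ≤ j → j ≤ lmax →
    succVal lmax W (G.zetaSet f1 σ q j) (G.fval f2 q j)

/-- The initial function `f_I`. -/
noncomputable def fI : FMap G := fun q => if q = G.qI then some (fun _ => 0) else none

/-- The unsafe set 𝒰 ⊆ 𝓕. -/
def FU (lmax W : ℕ) : Set (FMap G) :=
  {f | G.ValidF lmax W f ∧ ∃ q ∈ G.fsupp f, G.fval f q lmax < 0}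

/-- The partial order ⪯ on 𝓕. -/
def Preceq (lmax : ℕ) (f g : FMap G) : Prop :=
  G.fsupp f ⊆ G.fsupp g ∧
  ∀ q ∈ G.fsupp f, ∀ i, 1 ≤ i → i ≤ lmax →
    ∃ j, i ≤ j ∧ j ≤ lmax ∧ G.fval g q j ≤ G.fval f q i

/-- Upward-closedness (within 𝓕) with respect to ⪯. -/
def UpClosed (lmax W : ℕ) (S : Set (FMap G)) : Prop :=
  ∀ f ∈ S, ∀ g ∈ G.Fset lmax W, G.Preceq lmax f g → g ∈ S

/-- Uncontrollable predecessors in the game `G'`. -/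
def upreF (lmax W : ℕ) (S : Set (FMap G)) : Set (FMap G) :=
  {p | G.ValidF lmax W p ∧ ∀ σ : G.A, ∃ f2 ∈ S, G.IsSucc lmax W p σ f2}

/-- The set of ⪯-minimal elements of `T`. -/
def minimal (lmax : ℕ) (T : Set (FMap G)) : Set (FMap G) :=
  {x | x ∈ T ∧ ∀ y ∈ T, G.Preceq lmax y x → y = x}

/-- The antichain version ⌊upre⌋ of the uncontrollable-predecessors operator. -/
def acUpre (lmax W : ℕ) (a : Set (FMap G)) : Set (FMap G) :=
  G.minimal lmax {p | G.ValidF lmax W p ∧ p ∉ G.FU lmax W ∧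
    ∀ σ : G.A, ∃ q' ∈ a, ∃ r', G.IsSucc lmax W p σ r' ∧ G.Preceq lmax q' r'}

/-- Upward closure within 𝓕. -/
def upSet (lmax W : ℕ) (T : Set (FMap G)) : Set (FMap G) :=
  {g | g ∈ G.Fset lmax W ∧ ∃ f ∈ T, G.Preceq lmax f g}

/-- Histories of the perfect-information game `G'`. -/
def histP (fs : ℕ → FMap G) (act : ℕ → G.A) (n : ℕ) : List (FMap G × G.A) :=
  (List.range n).map fun i => (fs i, act i)

/-- The given strategy of Eve is winning for the safety objective of `G'`:
every consistent play (a sequence of σ-successor moves from `f_I`) avoids 𝒰. -/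
def WinsSafeP (lmax W : ℕ) (str : List (FMap G × G.A) → FMap G → G.A) : Prop :=
  ∀ fs : ℕ → FMap G, ∀ act : ℕ → G.A,
    fs 0 = G.fI →
    (∀ i, G.IsSucc lmax W (fs i) (act i) (fs (i + 1))) →
    (∀ n, act n = str (G.histP fs act n) (fs n)) →
    ∀ i, fs i ∉ G.FU lmax W

/-- The monotone map `X ↦ 𝒰 ∪ upre(X)` on the powerset lattice of 𝓕. -/
def safeOp (lmax W : ℕ) : Set (FMap G) →o Set (FMap G) where
  toFun X := G.FU lmax W ∪ G.upreF lmax W X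
  monotone' := by
    intro X Y hXY f hf
    rcases hf with hf | hf
    · exact Or.inl hf
    · refine Or.inr ⟨hf.1, fun σ => ?_⟩
      obtain ⟨f2, hf2, hs⟩ := hf.2 σ
      exact ⟨f2, hXY hf2, hs⟩

end WGA

/-!
If some function `f_i` of a play of `G'` enters `𝒰`, some state `q ∈ supp(f_i)` has
`f_i(q)_lmax < 0`. Unfolding the definition of σ-successors, `f(q)_j` dominates the weight of
a concrete path of length `j` ending in `q` through the supports, all of whose proper
prefixes already had negative weight (clamping at `-W·lmax` only raises values, so it never
spoils this bound); so there is a concrete path on which every window of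
length `1, …, lmax` starting at position `i - lmax` is negative. Prolonged backwards through
the supports to `q_I` and forwards by the strategy `λ`, it concretizes a play consistent with
`λ` (because `λ'` copies `λ` on observations covering the supports) that violates
`DirFix(0, lmax)`.
-/

namespace WGA

variable {G : WGA} {lmax W : ℕ}

theorem succVal_exists_le_of_neg {Z : Set ℤ} {v : ℤ} (h : succVal lmax W Z v) (hv : v < 0) :
    ∃ z ∈ Z, z ≤ v := by
  rcases h with ⟨-, rfl⟩ | ⟨z, hz, rfl⟩
  · omega
  · exact ⟨z, hz.1, by omega⟩

section Successor

variable {f f' : FMap G} {σ : G.A} {q : G.Q}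

theorem IsSucc.exists_pred (h : G.IsSucc lmax W f σ f') (hq : q ∈ G.fsupp f') :
    ∃ p ∈ G.fsupp f, G.Δ p σ q := by
  obtain ⟨-, ⟨o, -, hsupp⟩, -⟩ := h
  rw [hsupp] at hq
  exact hq.1

theorem IsSucc.exists_pred_of_fval_one_neg (h : G.IsSucc lmax W f σ f') (hq : q ∈ G.fsupp f')
    (hlmax : 1 ≤ lmax) (hneg : G.fval f' q 1 < 0) :
    ∃ p ∈ G.fsupp f, G.Δ p σ q ∧ G.w p σ q ≤ G.fval f' q 1 := by
  obtain ⟨z, hz, hzv⟩ := succVal_exists_le_of_neg (h.2.2 q hq 1 le_rfl hlmax) hneg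
  rw [zetaSet, if_pos rfl] at hz
  obtain ⟨p, hp, hΔ, rfl⟩ := hz
  exact ⟨p, hp, hΔ, hzv⟩

theorem IsSucc.exists_pred_of_fval_succ_neg (h : G.IsSucc lmax W f σ f') (hq : q ∈ G.fsupp f')
    {j : ℕ} (hj : 1 ≤ j) (hjl : j + 1 ≤ lmax) (hneg : G.fval f' q (j + 1) < 0) :
    ∃ p ∈ G.fsupp f, G.Δ p σ q ∧ G.fval f p j < 0 ∧
      G.fval f p j + G.w p σ q ≤ G.fval f' q (j + 1) := by
  obtain ⟨z, hz, hzv⟩ := succVal_exists_le_of_neg (h.2.2 q hq (j + 1) (by omega) hjl) hneg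
  rw [zetaSet, if_neg (by omega), Nat.add_sub_cancel] at hz
  obtain ⟨p, hp, hΔ, hp_neg, rfl⟩ := hz
  exact ⟨p, hp, hΔ, hp_neg, hzv⟩

theorem ValidF.fval_zero (h : G.ValidF lmax W f) (q : G.Q) : G.fval f q 0 = 0 := by
  unfold fval
  cases hf : f q with
  | none => rfl
  | some g => exact (h q g hf).2 0 (Or.inl rfl)

end Successor

theorem fsupp_fI : G.fsupp G.fI = {G.qI} := by
  ext q
  by_cases hq : q = G.qI <;> simp [fsupp, fI, hq]

theorem fval_fI (q : G.Q) (i : ℕ) : G.fval G.fI q i = 0 := by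
  unfold fval fI
  split_ifs <;> rfl

theorem winSum_succ (π : ℕ → G.Q) (act : ℕ → G.A) (i j : ℕ) :
    G.winSum π act i (j + 1) =
      G.winSum π act i j + G.w (π (i + j)) (act (i + j)) (π (i + j + 1)) :=
  Finset.sum_range_succ _ _

theorem winSum_congr {π π' : ℕ → G.Q} {act act' : ℕ → G.A} {i j : ℕ}
    (hπ : ∀ t, i ≤ t → t ≤ i + j → π t = π' t)
    (hact : ∀ t, i ≤ t → t < i + j → act t = act' t) :
    G.winSum π act i j = G.winSum π' act' i j :=
  Finset.sum_congr rfl fun k hk => by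
    rw [Finset.mem_range] at hk
    rw [hπ (i + k) (by omega) (by omega), hπ (i + k + 1) (by omega) (by omega),
      hact (i + k) (by omega) (by omega)]

theorem hist_succ (obs : ℕ → Set G.Q) (act : ℕ → G.A) (n : ℕ) :
    G.hist obs act (n + 1) = G.hist obs act n ++ [(obs n, act n)] := by
  simp [hist, List.range_succ]

theorem hist_congr {obs obs' : ℕ → Set G.Q} {act act' : ℕ → G.A} {n : ℕ}
    (h : ∀ t < n, obs t = obs' t ∧ act t = act' t) : G.hist obs act n = G.hist obs' act' n :=
  List.map_congr_left fun t ht => by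
    obtain ⟨hobs, hact⟩ := h t (List.mem_range.1 ht)
    rw [hobs, hact]

section SupportPaths

variable {fs : ℕ → FMap G} {act : ℕ → G.A}

def SuppPath (fs : ℕ → FMap G) (act : ℕ → G.A) (n : ℕ) (π : ℕ → G.Q) : Prop :=
  (∀ t ≤ n, π t ∈ G.fsupp (fs t)) ∧ ∀ t < n, G.Δ (π t) (act t) (π (t + 1))

theorem SuppPath.update {n : ℕ} {π : ℕ → G.Q} {q : G.Q} (h : SuppPath fs act n π)
    (hq : q ∈ G.fsupp (fs (n + 1))) (hΔ : G.Δ (π n) (act n) q) :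
    SuppPath fs act (n + 1) (Function.update π (n + 1) q) := by
  constructor
  · intro t ht
    rcases Nat.lt_or_eq_of_le ht with ht | rfl
    · rw [Function.update_of_ne (by omega)]
      exact h.1 t (by omega)
    · rw [Function.update_self]
      exact hq
  · intro t ht
    rw [Function.update_of_ne (by omega)]
    rcases Nat.lt_or_eq_of_le (Nat.le_of_lt_succ ht) with ht | rfl
    · rw [Function.update_of_ne (by omega)]
      exact h.2 t ht
    · rw [Function.update_self]
      exact hΔ

variable (hsucc : ∀ t, G.IsSucc lmax W (fs t) (act t) (fs (t + 1)))
include hsucc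

theorem exists_suppPath : ∀ n, ∀ q ∈ G.fsupp (fs n), ∃ π, SuppPath fs act n π ∧ π n = q
  | 0, q, hq => ⟨fun _ => q, ⟨fun t ht => by rwa [Nat.le_zero.1 ht], by simp⟩, rfl⟩
  | n + 1, q, hq => by
    obtain ⟨p, hp, hΔ⟩ := (hsucc n).exists_pred hq
    obtain ⟨π, hπ, rfl⟩ := exists_suppPath n p hp
    exact ⟨_, hπ.update hq hΔ, Function.update_self _ _ _⟩

theorem exists_obs_superset_fsupp (h0 : fs 0 = G.fI) : ∀ t, ∃ o ∈ G.Obs, G.fsupp (fs t) ⊆ o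
  | 0 => by
    obtain ⟨o, ⟨ho, hqo⟩, -⟩ := G.obs_partition G.qI
    exact ⟨o, ho, by rwa [h0, fsupp_fI, Set.singleton_subset_iff]⟩
  | t + 1 => by
    obtain ⟨-, ⟨o, ho, hsupp⟩, -⟩ := hsucc t
    exact ⟨o, ho, hsupp ▸ Set.inter_subset_right⟩

theorem exists_suppPath_negative_windows (h0 : fs 0 = G.fI) {j : ℕ} (hj : 1 ≤ j)
    (hjl : j ≤ lmax) {n : ℕ} {q : G.Q} (hq : q ∈ G.fsupp (fs n))
    (hneg : G.fval (fs n) q j < 0) :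
    ∃ m π, n = m + j ∧ SuppPath fs act n π ∧ π n = q ∧
      (∀ l, 1 ≤ l → l ≤ j → G.winSum π act m l < 0) ∧
      G.winSum π act m j ≤ G.fval (fs n) q j := by
  have hpos : ∀ {n q j}, G.fval (fs n) q j < 0 → ∃ n', n = n' + 1 := fun h =>
    Nat.exists_eq_succ_of_ne_zero fun hn => by simp [hn, h0, fval_fI] at h
  induction j, hj using Nat.le_induction generalizing n q with
  | base =>
    obtain ⟨n, rfl⟩ := hpos hneg
    obtain ⟨p, hp, hΔ, hw⟩ := (hsucc n).exists_pred_of_fval_one_neg hq hjl hneg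
    obtain ⟨π, hπ, rfl⟩ := exists_suppPath hsucc n p hp
    have hsum : G.winSum (Function.update π (n + 1) q) act n 1 = G.w (π n) (act n) q := by
      simp [winSum, Function.update_of_ne]
    refine ⟨n, _, rfl, hπ.update hq hΔ, Function.update_self _ _ _,
      fun l hl1 hl => ?_, hsum ▸ hw⟩
    obtain rfl : l = 1 := by omega
    exact hsum ▸ hw.trans_lt hneg
  | succ j hj ih =>
    obtain ⟨n, rfl⟩ := hpos hneg
    obtain ⟨p, hp, hΔ, hp_neg, hle⟩ :=
      (hsucc n).exists_pred_of_fval_succ_neg hq hj hjl hneg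
    obtain ⟨m, π, rfl, hπ, rfl, hwin, hsum⟩ := ih (by omega) hp hp_neg
    set π' := Function.update π (m + j + 1) q with hπ'
    have hprefix : ∀ l ≤ j, G.winSum π' act m l = G.winSum π act m l := fun l hl =>
      winSum_congr (fun t _ ht => Function.update_of_ne (by omega) _ _) fun _ _ _ => rfl
    have hlast : G.winSum π' act m (j + 1) ≤ G.fval (fs (m + j + 1)) q (j + 1) := by
      rw [winSum_succ, hprefix j le_rfl, hπ', Function.update_of_ne (by omega),
        Function.update_self]
      omega
    refine ⟨m, π', by omega, hπ.update hq hΔ, Function.update_self _ _ _,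
      fun l hl1 hl => ?_, hlast⟩
    rcases Nat.lt_or_eq_of_le hl with hl | rfl
    · rw [hprefix l (by omega)]
      exact hwin l hl1 (by omega)
    · exact hlast.trans_lt hneg

end SupportPaths

section Extension

variable (str : List (Set G.Q × G.A) → Set G.Q → G.A)

/-- Positions are triples (history, current state, current observation). -/
noncomputable def playStep (s : List (Set G.Q × G.A) × G.Q × Set G.Q) :
    List (Set G.Q × G.A) × G.Q × Set G.Q :=
  let q' := (G.total s.2.1 (str s.1 s.2.2)).choose
  (s.1 ++ [(s.2.2, str s.1 s.2.2)], q', (G.obs_partition q').exists.choose)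

theorem Δ_playStep (s : List (Set G.Q × G.A) × G.Q × Set G.Q) :
    G.Δ s.2.1 (str s.1 s.2.2) (playStep str s).2.1 :=
  (G.total _ _).choose_spec

theorem playStep_obs (s : List (Set G.Q × G.A) × G.Q × Set G.Q) :
    (playStep str s).2.2 ∈ G.Obs ∧ (playStep str s).2.1 ∈ (playStep str s).2.2 :=
  (G.obs_partition _).exists.choose_spec

theorem exists_consistent_play_extending {n : ℕ} {obs : ℕ → Set G.Q} {act : ℕ → G.A}
    {π : ℕ → G.Q} (hobs : ∀ t ≤ n, obs t ∈ G.Obs) (hπ : ∀ t ≤ n, π t ∈ obs t)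
    (hΔ : ∀ t < n, G.Δ (π t) (act t) (π (t + 1)))
    (hcons : ∀ t < n, act t = str (G.hist obs act t) (obs t)) :
    ∃ obs' act' π', (∀ t ≤ n, obs' t = obs t ∧ π' t = π t) ∧
      (∀ t < n, act' t = act t) ∧ (∀ t, obs' t ∈ G.Obs) ∧ G.Concretizes obs' act' π' ∧
      G.Consistent str obs' act' := by
  set s : ℕ → List (Set G.Q × G.A) × G.Q × Set G.Q :=
    fun k => (playStep str)^[k] (G.hist obs act n, π n, obs n)
  have hs : ∀ k, s (k + 1) = playStep str (s k) := fun k => Function.iterate_succ_apply' _ _ _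
  set obs' := fun t => if t < n then obs t else (s (t - n)).2.2
  set act' := fun t => if t < n then act t else str (s (t - n)).1 (s (t - n)).2.2
  set π' := fun t => if t < n then π t else (s (t - n)).2.1
  have hobs_le : ∀ t ≤ n, obs' t = obs t ∧ π' t = π t := fun t ht => by
    rcases Nat.lt_or_eq_of_le ht with ht | rfl
    · simp [obs', π', ht]
    · simp [obs', π', s]
  have hact_lt : ∀ t < n, act' t = act t := fun t ht => if_pos ht
  have hge : ∀ k, obs' (n + k) = (s k).2.2 ∧ π' (n + k) = (s k).2.1 ∧
      act' (n + k) = str (s k).1 (s k).2.2 := fun k => by simp [obs', π', act']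
  have hhist : ∀ k, (s k).1 = G.hist obs' act' (n + k) := by
    intro k
    induction k with
    | zero => exact hist_congr fun t ht => ⟨(hobs_le t ht.le).1.symm, (hact_lt t ht).symm⟩
    | succ k ih => rw [hs, ← add_assoc, hist_succ, (hge k).1, (hge k).2.2, ← ih]; rfl
  have hsplit : ∀ t, t ≤ n ∨ ∃ k, t = n + (k + 1) := fun t =>
    (le_or_gt t n).imp_right fun h => ⟨t - n - 1, by omega⟩
  refine ⟨obs', act', π', hobs_le, hact_lt, fun t => ?_, ⟨fun t => ?_, fun t => ?_⟩,
    fun t => ?_⟩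
  · rcases hsplit t with ht | ⟨k, rfl⟩
    · exact (hobs_le t ht).1 ▸ hobs t ht
    · rw [(hge (k + 1)).1, hs]
      exact (playStep_obs str _).1
  · rcases hsplit t with ht | ⟨k, rfl⟩
    · rw [(hobs_le t ht).1, (hobs_le t ht).2]
      exact hπ t ht
    · rw [(hge (k + 1)).1, (hge (k + 1)).2.1, hs]
      exact (playStep_obs str _).2
  · rcases lt_or_ge t n with ht | ht
    · rw [(hobs_le t ht.le).2, hact_lt t ht, (hobs_le (t + 1) ht).2]
      exact hΔ t ht
    · obtain ⟨k, rfl⟩ := Nat.exists_eq_add_of_le ht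
      rw [(hge k).2.1, (hge k).2.2, add_assoc, (hge (k + 1)).2.1, hs]
      exact Δ_playStep str _
  · rcases lt_or_ge t n with ht | ht
    · rw [hact_lt t ht, (hobs_le t ht.le).1, hist_congr fun t' ht' =>
        ⟨(hobs_le t' (by omega)).1, hact_lt t' (by omega)⟩]
      exact hcons t ht
    · obtain ⟨k, rfl⟩ := Nat.exists_eq_add_of_le ht
      rw [(hge k).2.2, hhist, (hge k).1]

end Extension

end WGA

theorem dirfix_completeness_general (G : WGA) (lmax W : ℕ)
    (str : List (Set G.Q × G.A) → Set G.Q → G.A)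
    (hwin : ∀ obs act, G.IsPlay obs act → G.Consistent str obs act →
      G.DirFix 0 lmax obs act)
    (strP : List (WGA.FMap G × G.A) → WGA.FMap G → G.A)
    (hrel : ∀ (fs : ℕ → WGA.FMap G) (act : ℕ → G.A) (n : ℕ) (obs : ℕ → Set G.Q),
      fs 0 = G.fI →
      (∀ i, i < n → G.IsSucc lmax W (fs i) (act i) (fs (i + 1))) →
      (∀ i, i ≤ n → obs i ∈ G.Obs ∧ G.fsupp (fs i) ⊆ obs i) →
      strP (G.histP fs act n) (fs n) = str (G.hist obs act n) (obs n)) :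
    G.WinsSafeP lmax W strP := by
  intro fs act h0 hsucc hcons i ⟨hvalid, q, hq, hneg⟩
  have hlmax : 1 ≤ lmax := Nat.one_le_iff_ne_zero.2 fun h => by
    simp [h, hvalid.fval_zero] at hneg
  obtain ⟨m, π, rfl, hπ, -, hneg_windows, -⟩ :=
    WGA.exists_suppPath_negative_windows hsucc h0 hlmax le_rfl hq hneg
  choose obs hobs hsupp using WGA.exists_obs_superset_fsupp hsucc h0
  have hcons_obs : ∀ t, act t = str (G.hist obs act t) (obs t) := fun t =>
    (hcons t).trans (hrel fs act t obs h0 (fun k _ => hsucc k) fun k _ => ⟨hobs k, hsupp k⟩)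
  obtain ⟨obs', act', π', hagree, hact, hobs', hconc, hcons'⟩ :=
    WGA.exists_consistent_play_extending str (fun t _ => hobs t)
      (fun t ht => hsupp t (hπ.1 t ht)) hπ.2 fun t _ => hcons_obs t
  have hqI : G.qI ∈ obs' 0 := by
    rw [(hagree 0 (Nat.zero_le _)).1]
    exact hsupp 0 (by simp [h0, WGA.fsupp_fI])
  obtain ⟨l, hl1, hll, hgood⟩ := hwin obs' act' ⟨hobs', hqI, π', hconc⟩ hcons' π' hconc m
  have hbad : G.winSum π' act' m l < 0 := by
    rw [WGA.winSum_congr (fun t _ ht => (hagree t (by omega)).2) fun t _ ht => hact t (by omega)]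
    exact hneg_windows l hl1 hll
  exact (div_neg_of_neg_of_pos (by exact_mod_cast hbad) (by exact_mod_cast hl1)).not_ge hgood

/-- Lemma 6: if Eve wins `DirFix(0,lmax)` in `G`, then the strategy
`λ'(ρ') = λ(obs(supp(ρ')))` is winning for her in the safety game `G'`. -/
theorem dirfix_completeness (G : WGA) (lmax W : ℕ) (hlmax : 1 ≤ lmax)
    (hW : ∀ p σ q, G.Δ p σ q → |G.w p σ q| ≤ (W : ℤ))
    (hqI : ({G.qI} : Set G.Q) ∈ G.Obs)
    (str : List (Set G.Q × G.A) → Set G.Q → G.A)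
    (hwin : ∀ obs act, G.IsPlay obs act → G.Consistent str obs act →
      G.DirFix 0 lmax obs act)
    (strP : List (WGA.FMap G × G.A) → WGA.FMap G → G.A)
    (hrel : ∀ (fs : ℕ → WGA.FMap G) (act : ℕ → G.A) (n : ℕ) (obs : ℕ → Set G.Q),
      fs 0 = G.fI →
      (∀ i, i < n → G.IsSucc lmax W (fs i) (act i) (fs (i + 1))) →
      (∀ i, i ≤ n → obs i ∈ G.Obs ∧ G.fsupp (fs i) ⊆ obs i) →
      strP (G.histP fs act n) (fs n) = str (G.hist obs act n) (obs n)) :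
    G.WinsSafeP lmax W strP :=
  dirfix_completeness_general G lmax W str hwin strP hrel
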